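/- Let $A$ be a finitely generated abelian group, $p$ a prime, and suppose $(\mathbb{F}_p, S, \varphi, \delta, \rho)$ is a ubr-algorithm for $A$ (i.e. $\varphi(S)$ generates $A$, $\delta^{j+1}=\delta^j$ for some $j$, $\hat\varphi\circ\delta = \hat\varphi$, and $\hat\varphi\circ\rho = 0$, where $\hat\varphi : \mathbb{F}_p\langle S\rangle \to A \otimes \mathbb{F}_p$ is induced by $\varphi$). If $\dim_{\mathbb{F}_p} \ker\bar\rho = \mathrm{rank}\,A$, where $\bar\rho := \Delta\circ\rho|_{\mathrm{im}\,\Delta}$ with $\Delta := \delta^j$, then $A$ has no elements of order $p$. -/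

import Mathlib

/-!
Write `A ≅ ℤⁿ × T` with `T` finite. Tensoring with `ℚ` kills `T`, so `rank A = n`, whereas
`𝔽_p ⊗ A ≅ 𝔽_pⁿ × (𝔽_p ⊗ T)`, and an element of order `p` in `T` lies in a cyclic summand of order
divisible by `p`, which maps onto `𝔽_p`; so `dim (𝔽_p ⊗ A) > rank A`.

On the other hand `dim (𝔽_p ⊗ A) ≤ dim ker ρ̄`: since `φ̂ ∘ Δ = φ̂`, the restriction of the
surjection `φ̂` to `im Δ` is still onto, and since `φ̂ ∘ ρ = 0` it kills `im ρ̄`, so by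
rank–nullity `dim (𝔽_p ⊗ A) ≤ dim im Δ - dim im ρ̄ = dim ker ρ̄`.
-/

open Module TensorProduct Function DirectSum

section LinearAlgebra

variable {K V W : Type*} [Field K] [AddCommGroup V] [Module K V] [AddCommGroup W] [Module K W]

theorem finrank_le_finrank_ker_of_range_le_ker [FiniteDimensional K V] {f : V →ₗ[K] W}
    (hf : Surjective f) {ψ : V →ₗ[K] V} (hψ : LinearMap.range ψ ≤ LinearMap.ker f) :
    finrank K W ≤ finrank K (LinearMap.ker ψ) := by
  have hf_nullity := f.finrank_range_add_finrank_ker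
  have hψ_nullity := ψ.finrank_range_add_finrank_ker
  have hrange := Submodule.finrank_mono hψ
  rw [LinearMap.range_eq_top.mpr hf, finrank_top] at hf_nullity
  omega

theorem LinearMap.comp_pow_eq_self {f : V →ₗ[K] W} {δ : Module.End K V} (h : f ∘ₗ δ = f)
    (n : ℕ) : f ∘ₗ δ ^ n = f := by
  induction n with
  | zero => rfl
  | succ n ih => rw [pow_succ, Module.End.mul_eq_comp, ← LinearMap.comp_assoc, ih, h]

theorem finrank_le_finrank_ker_restrict [FiniteDimensional K V] {f : V →ₗ[K] W}
    (hf : Surjective f) {Δ ρ : Module.End K V} (hΔ : f ∘ₗ Δ = f) (hρ : f ∘ₗ ρ = 0)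
    (ρbar : LinearMap.range Δ →ₗ[K] LinearMap.range Δ)
    (hρbar : ∀ x, (ρbar x : V) = Δ (ρ x)) :
    finrank K W ≤ finrank K (LinearMap.ker ρbar) := by
  have hfΔ (x : V) : f (Δ x) = f x := LinearMap.congr_fun hΔ x
  refine finrank_le_finrank_ker_of_range_le_ker (f := f ∘ₗ (LinearMap.range Δ).subtype)
    (fun y ↦ ?_) ?_
  · obtain ⟨x, rfl⟩ := hf y
    exact ⟨⟨Δ x, x, rfl⟩, hfΔ x⟩
  · rintro _ ⟨x, rfl⟩
    simp only [LinearMap.mem_ker, LinearMap.comp_apply, Submodule.subtype_apply, hρbar, hfΔ]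
    exact LinearMap.congr_fun hρ x

end LinearAlgebra

section BaseChange

variable {A : Type*} [AddCommGroup A]

theorem surjective_of_closure_range_eq_top {R S : Type*} [CommRing R] [DecidableEq S]
    {φ : S → A} (hgen : AddSubgroup.closure (Set.range φ) = ⊤)
    {f : (S → R) →ₗ[R] R ⊗[ℤ] A} (hf : ∀ s, f (Pi.single s 1) = (1 : R) ⊗ₜ[ℤ] φ s) :
    Surjective f := by
  have one_tmul_mem (b : A) : (1 : R) ⊗ₜ[ℤ] b ∈ LinearMap.range f := by
    have : AddSubgroup.closure (Set.range φ) ≤ (LinearMap.range f).toAddSubgroup.comap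
        (TensorProduct.mk ℤ R A 1).toAddMonoidHom := by
      rw [AddSubgroup.closure_le]
      rintro _ ⟨s, rfl⟩
      exact ⟨Pi.single s 1, hf s⟩
    exact this (hgen ▸ AddSubgroup.mem_top b)
  rw [← LinearMap.range_eq_top, eq_top_iff]
  rintro x -
  induction x using TensorProduct.induction_on with
  | zero => exact zero_mem _
  | tmul r b => simpa [smul_tmul'] using Submodule.smul_mem _ r (one_tmul_mem b)
  | add x y hx hy => exact add_mem hx hy

theorem finrank_le_finrank_baseChange_of_surjective {R K M V : Type*} [CommRing R] [Field K]
    [Algebra R K] [AddCommGroup M] [Module R M] [Module.Finite R M] [AddCommGroup V]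
    [Module R V] [Module K V] [IsScalarTower R K V] {g : M →ₗ[R] V} (hg : Surjective g) :
    finrank K V ≤ finrank K (K ⊗[R] M) := by
  refine LinearMap.finrank_le_finrank_of_surjective (f := g.liftBaseChange K) fun v ↦ ?_
  obtain ⟨m, rfl⟩ := hg v
  exact ⟨1 ⊗ₜ m, by simp⟩

theorem finrank_tensor_free_prod {K T : Type*} [Field K] [AddCommGroup T] [Module.Finite ℤ T]
    {n : ℕ} (e : A ≃ₗ[ℤ] (Fin n →₀ ℤ) × T) :
    finrank K (K ⊗[ℤ] A) = n + finrank K (K ⊗[ℤ] T) := by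
  rw [(e.baseChange ℤ K _ _ ≪≫ₗ TensorProduct.prodRight ℤ K K _ _).finrank_eq,
    finrank_prod, finrank_baseChange, finrank_finsupp_self, Fintype.card_fin]

theorem finrank_rat_tensor_eq_zero_of_finite (T : Type*) [AddCommGroup T] [Finite T] :
    finrank ℚ (ℚ ⊗[ℤ] T) = 0 :=
  (TensorProduct.isBaseChange ℤ T ℚ).finrank_eq.trans
    (isAddTorsion_iff_isTorsion_int.mp isAddTorsion_of_finite).finrank_eq_zero

end BaseChange

section Torsion

theorem addOrderOf_eq_addOrderOf_snd {F T : Type*} [AddMonoid F] [IsAddTorsionFree F]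
    [AddMonoid T] {x : F × T} (hx : addOrderOf x ≠ 0) : addOrderOf x = addOrderOf x.2 := by
  rw [Prod.addOrderOf] at hx ⊢
  have hfst : x.1 = 0 := (isOfFinAddOrder_iff_eq_zero x.1).mp <|
    addOrderOf_ne_zero_iff.mp fun h ↦ hx (by rw [h, Nat.lcm_zero_left])
  rw [hfst, addOrderOf_zero, Nat.lcm_one_left]

theorem ZMod.addOrderOf_dvd {n : ℕ} (y : ZMod n) : addOrderOf y ∣ n :=
  addOrderOf_dvd_of_nsmul_eq_zero (by simp)

variable {p : ℕ} [Fact p.Prime]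

theorem DirectSum.exists_dvd_of_addOrderOf_eq {ι : Type*} {q : ι → ℕ}
    {y : ⨁ i, ZMod (q i)} (hy : addOrderOf y = p) : ∃ i, p ∣ q i := by
  have hy0 : y ≠ 0 := by
    rintro rfl
    exact (Fact.out : p.Prime).one_lt.ne' (hy ▸ addOrderOf_zero)
  obtain ⟨i, hi⟩ : ∃ i, y i ≠ 0 := by
    by_contra! h
    exact hy0 (DFinsupp.ext h)
  have hpy : p • y i = 0 := by
    rw [← DFinsupp.smul_apply, ← hy, addOrderOf_nsmul_eq_zero, DFinsupp.zero_apply]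
  exact ⟨i, addOrderOf_eq_prime hpy hi ▸ ZMod.addOrderOf_dvd (y i)⟩

theorem DirectSum.exists_surjective_zmod_of_addOrderOf_eq {ι : Type*} [DecidableEq ι]
    {q : ι → ℕ} {y : ⨁ i, ZMod (q i)} (hy : addOrderOf y = p) :
    ∃ g : (⨁ i, ZMod (q i)) →ₗ[ℤ] ZMod p, Surjective g := by
  obtain ⟨i, hi⟩ := exists_dvd_of_addOrderOf_eq hy
  refine ⟨(ZMod.castHom hi (ZMod p)).toAddMonoidHom.toIntLinearMap ∘ₗ
    DirectSum.component ℤ ι _ i, fun z ↦ ?_⟩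
  obtain ⟨w, rfl⟩ := ZMod.castHom_surjective hi z
  exact ⟨DirectSum.lof ℤ ι _ i w, by simp⟩

end Torsion

theorem finrank_rat_tensor_lt_finrank_zmod_tensor {p : ℕ} [Fact p.Prime] {A : Type*}
    [AddCommGroup A] [Module.Finite ℤ A] {a : A} (ha : addOrderOf a = p) :
    finrank ℚ (ℚ ⊗[ℤ] A) < finrank (ZMod p) (ZMod p ⊗[ℤ] A) := by
  classical
  have : AddGroup.FG A := Module.Finite.iff_addGroup_fg.mp ‹_›
  obtain ⟨n, ι, _, q, hq, k, ⟨e⟩⟩ := AddCommGroup.equiv_free_prod_directSum_zmod A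
  have : ∀ i, NeZero (q i ^ k i) := fun i ↦ ⟨pow_ne_zero _ (hq i).ne_zero⟩
  have : Finite (⨁ i, ZMod (q i ^ k i)) := Finite.of_equiv _ DFinsupp.equivFunOnFintype.symm
  have hea : addOrderOf (e a) = p := by rw [AddEquiv.addOrderOf_eq, ha]
  obtain ⟨g, hg⟩ := DirectSum.exists_surjective_zmod_of_addOrderOf_eq
    ((addOrderOf_eq_addOrderOf_snd (hea ▸ (Fact.out : p.Prime).ne_zero)).symm.trans hea)
  have hpos := finrank_le_finrank_baseChange_of_surjective (K := ZMod p) hg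
  rw [finrank_self] at hpos
  rw [finrank_tensor_free_prod e.toIntLinearEquiv, finrank_tensor_free_prod e.toIntLinearEquiv,
    finrank_rat_tensor_eq_zero_of_finite]
  omega

theorem stmt_7_general (p : ℕ) [Fact p.Prime] (S : Type*) [Fintype S] [DecidableEq S]
    (A : Type*) [AddCommGroup A] [Module.Finite ℤ A]
    (φ : S → A) (hgen : AddSubgroup.closure (Set.range φ) = ⊤)
    (φhat : (S → ZMod p) →ₗ[ZMod p] (ZMod p ⊗[ℤ] A))
    (hφhat : ∀ s : S, φhat (Pi.single s 1) = (1 : ZMod p) ⊗ₜ[ℤ] φ s)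
    (δ ρ : (S → ZMod p) →ₗ[ZMod p] (S → ZMod p)) (j : ℕ)
    (h3 : φhat ∘ₗ δ = φhat)
    (h4 : φhat ∘ₗ ρ = 0)
    (ρbar : LinearMap.range (δ ^ j) →ₗ[ZMod p] LinearMap.range (δ ^ j))
    (hρbar : ∀ x : LinearMap.range (δ ^ j),
      (ρbar x : S → ZMod p) = (δ ^ j) (ρ (x : S → ZMod p)))
    (hout : Module.finrank (ZMod p) (LinearMap.ker ρbar) =
      Module.finrank ℚ (ℚ ⊗[ℤ] A)) :
    ∀ a : A, addOrderOf a = p → a = 0 := by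
  intro a ha
  have hupper : finrank (ZMod p) (ZMod p ⊗[ℤ] A) ≤ finrank (ZMod p) (LinearMap.ker ρbar) :=
    finrank_le_finrank_ker_restrict (surjective_of_closure_range_eq_top hgen hφhat)
      (LinearMap.comp_pow_eq_self h3 j) h4 ρbar hρbar
  exact absurd (hupper.trans_eq hout) (finrank_rat_tensor_lt_finrank_zmod_tensor ha).not_ge

/-- If `(𝔽_p, S, φ, δ, ρ)` is a ubr-algorithm for the finitely generated abelian
group `A` and its output `dim ker ρ̄` equals `rank A` (`= dim_ℚ (ℚ ⊗_ℤ A)`),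
then `A` has no elements of (additive) order `p`. Here the free `𝔽_p`-vector
space on the finite set `S` is `S → ZMod p`, with basis `Pi.single s 1`. -/
theorem stmt_7 (p : ℕ) [Fact p.Prime] (S : Type*) [Fintype S] [DecidableEq S]
    (A : Type*) [AddCommGroup A] [Module.Finite ℤ A]
    (φ : S → A) (hgen : AddSubgroup.closure (Set.range φ) = ⊤)
    (φhat : (S → ZMod p) →ₗ[ZMod p] (ZMod p ⊗[ℤ] A))
    (hφhat : ∀ s : S, φhat (Pi.single s 1) = (1 : ZMod p) ⊗ₜ[ℤ] φ s)
    (δ ρ : (S → ZMod p) →ₗ[ZMod p] (S → ZMod p)) (j : ℕ)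
    (h2 : δ ^ (j + 1) = δ ^ j)
    (h3 : φhat ∘ₗ δ = φhat)
    (h4 : φhat ∘ₗ ρ = 0)
    (ρbar : LinearMap.range (δ ^ j) →ₗ[ZMod p] LinearMap.range (δ ^ j))
    (hρbar : ∀ x : LinearMap.range (δ ^ j),
      (ρbar x : S → ZMod p) = (δ ^ j) (ρ (x : S → ZMod p)))
    (hout : Module.finrank (ZMod p) (LinearMap.ker ρbar) =
      Module.finrank ℚ (ℚ ⊗[ℤ] A)) :
    ∀ a : A, addOrderOf a = p → a = 0 :=
  stmt_7_general p S A φ hgen φhat hφhat δ ρ j h3 h4 ρbar hρbar hout
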